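/- For any sequence s ∈ l¹(ℤ²), any ξ ∈ ℝ², and any l ∈ ℤ², the 2D discrete-time non-separable LCT of s satisfies (L_M s)(ξ + Bl) = (L_M s)(ξ) · e^{iπ (Bl)ᵀDB⁻¹ξ + iπ ξᵀDl + iπ (Bl)ᵀDl}. In particular |(L_M s)(ξ + Bl)| = |(L_M s)(ξ)|, i.e., |L_M s| is periodic with periodicity matrix B. -/

import Mathlib

open MeasureTheory Matrix Complex

noncomputable section

abbrev V2 : Type := Fin 2 → ℝ
abbrev Z2 : Type := Fin 2 → ℤ
abbrev M2 : Type := Matrix (Fin 2) (Fin 2) ℝ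

/-- cast an integer vector to a real vector -/
def zc (k : Z2) : V2 := fun i => (k i : ℝ)

/-- `ePi r = e^{iπ r}` -/
def ePi (r : ℝ) : ℂ := Complex.exp (Real.pi * Complex.I * r)

/-- quadratic/bilinear form `xᵀ P y` -/
def Q (P : M2) (x y : V2) : ℝ := x ⬝ᵥ P.mulVec y

/-- `√(det (iB))` (note `det(iB) = i² det B` for 2×2 `B`) -/
def sdet (B : M2) : ℂ := ((Complex.I ^ 2 * (B.det : ℂ))) ^ ((1 : ℂ)/2)

/-- the chirp `λ_M(t) = e^{iπ tᵀB⁻¹At}` -/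
def lam (A B : M2) (t : V2) : ℂ := ePi (Q (B⁻¹ * A) t t)

/-- the continuous 2D non-separable LCT -/
def LCT (A B D : M2) (f : V2 → ℂ) (ξ : V2) : ℂ :=
  (sdet B)⁻¹ * ∫ u : V2, f u * ePi (Q (B⁻¹ * A) u u - 2 * Q B⁻¹ u ξ + Q (D * B⁻¹) ξ ξ)

/-- the 2D discrete-time non-separable LCT -/
def DLCT (A B D : M2) (s : Z2 → ℂ) (ξ : V2) : ℂ :=
  (sdet B)⁻¹ * ∑' k : Z2,
    s k * ePi (Q (B⁻¹ * A) (zc k) (zc k) - 2 * Q B⁻¹ (zc k) ξ + Q (D * B⁻¹) ξ ξ)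

/-- the canonical (continuous) convolution `⋆_c` -/
def cconv (A B : M2) (f g : V2 → ℂ) (t : V2) : ℂ :=
  ePi (-(Q (B⁻¹ * A) t t)) * (sdet B)⁻¹ *
    ∫ x : V2, lam A B (t - x) * f (t - x) * (lam A B x * g x)

/-- the canonical semi-discrete convolution `⋆_{sd}` -/
def sdconv (A B : M2) (s : Z2 → ℂ) (g : V2 → ℂ) (t : V2) : ℂ :=
  ePi (-(Q (B⁻¹ * A) t t)) * (sdet B)⁻¹ *
    ∑' k : Z2, lam A B (zc k) * s k * (lam A B (t - zc k) * g (t - zc k))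

/-- the canonical discrete convolution `⋆_d` -/
def dconv (A B : M2) (s c : Z2 → ℂ) (l : Z2) : ℂ :=
  ePi (-(Q (B⁻¹ * A) (zc l) (zc l))) * (sdet B)⁻¹ *
    ∑' k : Z2, lam A B (zc k) * s k * (lam A B (zc (l - k)) * c (l - k))

/-- symplecticity of the block matrix `[A,B;C,D]` -/
def Symp (A B C D : M2) : Prop :=
  A * Bᵀ = B * Aᵀ ∧ C * Dᵀ = D * Cᵀ ∧ A * Dᵀ - B * Cᵀ = 1

/-- the unit half-open square `[0,1)²` -/
def box : Set V2 := Set.univ.pi fun _ => Set.Ico (0:ℝ) 1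

/-- real cast of an integer matrix -/
def Mr (M : Matrix (Fin 2) (Fin 2) ℤ) : M2 := M.map (Int.cast : ℤ → ℝ)

/-- the set `N(M)` of integer points in the fundamental parallelepiped -/
def NM (M : Matrix (Fin 2) (Fin 2) ℤ) : Set Z2 :=
  {k : Z2 | ∃ x : V2, x ∈ box ∧ zc k = (Mr M).mulVec x}

/-- the discrete time Fourier transform -/
def DTFT (d : Z2 → ℂ) (ξ : V2) : ℂ := ∑' k : Z2, d k * ePi (-(2 * (zc k ⬝ᵥ ξ)))

/-!
Replacing `ξ` by `ξ + Bl` adds to the phase of the `k`-th term of the series the amount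
`-2 kᵀB⁻¹Bl = -2 kᵀl ∈ 2ℤ`, which is invisible to `e^{iπ ·}`, plus a part independent of `k`;
the latter factors out of the series as a unimodular constant.
-/

lemma ePi_add (a b : ℝ) : ePi (a + b) = ePi a * ePi b := by
  rw [ePi, ePi, ePi, ← Complex.exp_add]
  push_cast
  ring_nf

lemma ePi_neg_two_mul_intCast (n : ℤ) : ePi (-(2 * n)) = 1 := by
  have h : (Real.pi : ℂ) * Complex.I * ((-(2 * n) : ℝ) : ℂ) =
      (-n : ℤ) * (2 * Real.pi * Complex.I) := by
    push_cast
    ring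
  rw [ePi, h, Complex.exp_int_mul_two_pi_mul_I]

lemma norm_ePi (r : ℝ) : ‖ePi r‖ = 1 := by
  simp [ePi, Complex.norm_exp]

lemma zc_dotProduct_zc (k l : Z2) : zc k ⬝ᵥ zc l = ((k ⬝ᵥ l : ℤ) : ℝ) := by
  simp [zc, dotProduct]

lemma Q_add_left (P : M2) (x y z : V2) : Q P (x + y) z = Q P x z + Q P y z :=
  add_dotProduct x y _

lemma Q_add_right (P : M2) (x y z : V2) : Q P x (y + z) = Q P x y + Q P x z := by
  rw [Q, Q, Q, mulVec_add, dotProduct_add]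

section Invertible

variable {B : M2} (hB : B.det ≠ 0)
include hB

lemma Q_inv_mulVec (x y : V2) : Q B⁻¹ x (B *ᵥ y) = x ⬝ᵥ y := by
  rw [Q, mulVec_mulVec, nonsing_inv_mul B hB.isUnit, one_mulVec]

lemma Q_mul_inv_mulVec (D : M2) (x y : V2) : Q (D * B⁻¹) x (B *ᵥ y) = Q D x y := by
  rw [Q, Q, mulVec_mulVec, mul_assoc, nonsing_inv_mul B hB.isUnit, mul_one]

lemma ePi_DLCT_phase_add_mulVec (A D : M2) (k l : Z2) (ξ : V2) :
    ePi (Q (B⁻¹ * A) (zc k) (zc k) - 2 * Q B⁻¹ (zc k) (ξ + B *ᵥ zc l) +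
        Q (D * B⁻¹) (ξ + B *ᵥ zc l) (ξ + B *ᵥ zc l)) =
      ePi (Q (B⁻¹ * A) (zc k) (zc k) - 2 * Q B⁻¹ (zc k) ξ + Q (D * B⁻¹) ξ ξ) *
        ePi (Q (D * B⁻¹) (B *ᵥ zc l) ξ + Q D ξ (zc l) + Q D (B *ᵥ zc l) (zc l)) := by
  have phase :
      Q (B⁻¹ * A) (zc k) (zc k) - 2 * Q B⁻¹ (zc k) (ξ + B *ᵥ zc l) +
          Q (D * B⁻¹) (ξ + B *ᵥ zc l) (ξ + B *ᵥ zc l) =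
        (Q (B⁻¹ * A) (zc k) (zc k) - 2 * Q B⁻¹ (zc k) ξ + Q (D * B⁻¹) ξ ξ) +
          (Q (D * B⁻¹) (B *ᵥ zc l) ξ + Q D ξ (zc l) + Q D (B *ᵥ zc l) (zc l)) +
          -(2 * ((k ⬝ᵥ l : ℤ) : ℝ)) := by
    simp only [Q_add_left, Q_add_right, Q_inv_mulVec hB, Q_mul_inv_mulVec hB,
      zc_dotProduct_zc]
    ring
  rw [phase, ePi_add, ePi_add, ePi_neg_two_mul_intCast, mul_one]

lemma DLCT_add_mulVec (A D : M2) (s : Z2 → ℂ) (ξ : V2) (l : Z2) :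
    DLCT A B D s (ξ + B *ᵥ zc l) =
      DLCT A B D s ξ *
        ePi (Q (D * B⁻¹) (B *ᵥ zc l) ξ + Q D ξ (zc l) + Q D (B *ᵥ zc l) (zc l)) := by
  simp only [DLCT, ePi_DLCT_phase_add_mulVec hB, ← mul_assoc, tsum_mul_right]

end Invertible

theorem dlct_periodic_general (A B D : M2) (hB : B.det ≠ 0) (s : Z2 → ℂ) :
    ∀ (ξ : V2) (l : Z2),
      (DLCT A B D s (ξ + B.mulVec (zc l)) =
        DLCT A B D s ξ *
          ePi (Q (D * B⁻¹) (B.mulVec (zc l)) ξ + Q D ξ (zc l) +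
               Q D (B.mulVec (zc l)) (zc l))) ∧
      ‖DLCT A B D s (ξ + B.mulVec (zc l))‖ = ‖DLCT A B D s ξ‖ := by
  intro ξ l
  have shift := DLCT_add_mulVec hB A D s ξ l
  exact ⟨shift, by rw [shift, norm_mul, norm_ePi, mul_one]⟩

/-- Quasi-periodicity of the 2D-DT-NS-LCT: for any `l ∈ ℤ²`,
`(L_M s)(ξ + Bl) = (L_M s)(ξ) e^{iπ[(Bl)ᵀDB⁻¹ξ + ξᵀDl + (Bl)ᵀDl]}`, hence
`|L_M s|` is periodic with periodicity matrix `B`. -/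
theorem dlct_periodic (A B C D : M2) (hSymp : Symp A B C D) (hB : B.det ≠ 0)
    (hBD : Bᵀ * D = Dᵀ * B) (s : Z2 → ℂ) (hs : Summable fun k => ‖s k‖) :
    ∀ (ξ : V2) (l : Z2),
      (DLCT A B D s (ξ + B.mulVec (zc l)) =
        DLCT A B D s ξ *
          ePi (Q (D * B⁻¹) (B.mulVec (zc l)) ξ + Q D ξ (zc l) +
               Q D (B.mulVec (zc l)) (zc l))) ∧
      ‖DLCT A B D s (ξ + B.mulVec (zc l))‖ = ‖DLCT A B D s ξ‖ :=
  dlct_periodic_general A B D hB s
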